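/- Difference-hierarchy normal form for limits with at most m mind changes (combinatorial core of Theorem 3.3): Let f : ℕ → Bool and m ∈ ℕ be such that the set {w : f w ≠ f (w+1)} has at most m elements. For k ≥ 1 define Y_k to hold iff there exist w₀ < w₁ < ⋯ < w_{k−1} with f wᵢ ≠ f (wᵢ+1) for all i < k and f (w_{k−1} + 1) = false, and define N_k in the same way with true in place of false; set Y₀ iff f 0 = false and N₀ iff f 0 = true. Then f is eventually constant, and its eventual value is false if and only if there exists k ≤ m with Y_k ∧ ¬N_{k+1}. (Consequently the limit condition is a finite Boolean combination of the Σ⁰₁-form conditions Y_k, N_k.) -/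
import Mathlib


/-- `ErshovSide f b k` is the condition `Y_k` (for `b = false`) resp. `N_k`
(for `b = true`): for `k = 0` it says `f 0 = b`, and for `k ≥ 1` it asserts the
existence of `w₀ < w₁ < ⋯ < w_{k-1}` with `f wᵢ ≠ f (wᵢ + 1)` for all `i < k`
and `f (w_{k-1} + 1) = b`. -/
def ErshovSide (f : ℕ → Bool) (b : Bool) : ℕ → Prop
  | 0 => f 0 = b
  | k + 1 => ∃ w : Fin (k + 1) → ℕ, StrictMono w ∧
      (∀ i, f (w i) ≠ f (w i + 1)) ∧ f (w (Fin.last k) + 1) = b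

/-- Difference-hierarchy normal form for limits with at most `m` mind changes
(combinatorial core of Theorem 3.3): if `f` has at most `m` mind changes then
`f` is eventually constant, and its eventual value is `false` iff
`∃ k ≤ m, Y_k ∧ ¬ N_{k+1}`. -/
theorem difference_hierarchy_normal_form (f : ℕ → Bool) (m : ℕ)
    (hfin : {w : ℕ | f w ≠ f (w + 1)}.Finite)
    (hcard : {w : ℕ | f w ≠ f (w + 1)}.ncard ≤ m) :
    (∃ m' : ℕ, ∃ ℓ : Bool, ∀ n ≥ m', f n = ℓ) ∧
    ((∃ m' : ℕ, ∀ n ≥ m', f n = false) ↔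
      ∃ k ≤ m, ErshovSide f false k ∧ ¬ ErshovSide f true (k + 1)) := by
  classical
  set S := {w : ℕ | f w ≠ f (w + 1)} with hSdef
  set T := hfin.toFinset with hTdef
  have hmemT : ∀ u, u ∈ T ↔ f u ≠ f (u + 1) := fun u => hfin.mem_toFinset
  set N := T.sup id + 1 with hNdef
  have hnotS : ∀ u ≥ N, f u = f (u + 1) := by
    intro u hu
    by_contra h
    have h1 : u ∈ T := (hmemT u).2 h
    have h2 : u ≤ T.sup id := Finset.le_sup (f := id) h1
    omega
  have const_after : ∀ a, (∀ u ≥ a, f u = f (u + 1)) → ∀ n ≥ a, f n = f a := by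
    intro a h n hn
    induction n, hn using Nat.le_induction with
    | base => rfl
    | succ n hn ih => rw [← h n hn, ih]
  have key : ∀ a, (∀ u ≥ a, f u = f (u + 1)) → f a = f N := by
    intro a h
    have h1 : f (max a N) = f a := const_after a h _ (le_max_left _ _)
    have h2 : f (max a N) = f N := const_after N hnotS _ (le_max_right _ _)
    rw [← h1, h2]
  have hconstN : ∀ n ≥ N, f n = f N := const_after N hnotS
  have hlim : (∃ m' : ℕ, ∀ n ≥ m', f n = false) ↔ f N = false := by
    constructor
    · rintro ⟨m', hm'⟩
      have h1 := hm' (max m' N) (le_max_left _ _)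
      rwa [hconstN _ (le_max_right _ _)] at h1
    · intro h
      exact ⟨N, fun n hn => (hconstN n hn).trans h⟩
  have hcardT : T.card ≤ m := by
    rwa [Set.ncard_eq_toFinset_card S hfin] at hcard
  refine ⟨⟨N, f N, hconstN⟩, hlim.trans ?_⟩
  constructor
  · intro hℓ
    refine ⟨T.card, hcardT, ?_, ?_⟩
    · -- Y_{|T|}
      rcases hc : T.card with _ | c
      · -- T empty
        have hTe : T = ∅ := Finset.card_eq_zero.mp hc
        have hall : ∀ u ≥ 0, f u = f (u + 1) := by
          intro u _
          by_contra h
          have : u ∈ T := (hmemT u).2 h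
          simp [hTe] at this
        show f 0 = false
        rw [key 0 hall]; exact hℓ
      · let e := T.orderIsoOfFin hc
        refine ⟨fun i => (e i : ℕ), ?_, ?_, ?_⟩
        · intro a b hab
          exact Subtype.coe_lt_coe.mpr (e.strictMono hab)
        · intro i
          exact (hmemT _).1 (e i).2
        · have hbig : ∀ u ≥ (e (Fin.last c) : ℕ) + 1, f u = f (u + 1) := by
            intro u hu
            by_contra h
            have huT : u ∈ T := (hmemT u).2 h
            have : (⟨u, huT⟩ : T) = e (e.symm ⟨u, huT⟩) := (e.apply_symm_apply _).symm
            have hle : (e (e.symm ⟨u, huT⟩) : ℕ) ≤ (e (Fin.last c) : ℕ) :=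
              Subtype.coe_le_coe.mpr (e.monotone (Fin.le_last _))
            have : u ≤ (e (Fin.last c) : ℕ) := by
              rw [show u = ((⟨u, huT⟩ : T) : ℕ) from rfl, this]
              exact hle
            omega
          rw [key _ hbig]; exact hℓ
    · -- ¬ N_{|T|+1}
      rintro ⟨w, hmono, hwS, -⟩
      have hinj : Set.InjOn w ↑(Finset.univ : Finset (Fin (T.card + 1))) :=
        hmono.injective.injOn
      have hmap : ∀ i ∈ (Finset.univ : Finset (Fin (T.card + 1))), w i ∈ T :=
        fun i _ => (hmemT _).2 (hwS i)
      have := Finset.card_le_card_of_injOn w hmap hinj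
      simp at this
  · rintro ⟨k, _, hY, hN'⟩
    by_contra hF
    have hℓ : f N = true := by revert hF; cases f N <;> simp
    -- derive N_{k+1}, contradiction
    rcases k with _ | j
    · have h0 : f 0 = false := hY
      have hTne : T.Nonempty := by
        by_contra h
        have hTe : T = ∅ := Finset.not_nonempty_iff_eq_empty.mp h
        have hall : ∀ u ≥ 0, f u = f (u + 1) := by
          intro u _
          by_contra hh
          have : u ∈ T := (hmemT u).2 hh
          simp [hTe] at this
        have := key 0 hall
        rw [h0, hℓ] at this
        exact Bool.noConfusion this
      set v := T.max' hTne with hv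
      have hvT : v ∈ T := T.max'_mem hTne
      have hafter : ∀ u ≥ v + 1, f u = f (u + 1) := by
        intro u hu
        by_contra h
        have : u ∈ T := (hmemT u).2 h
        have := T.le_max' u this
        omega
      have hfv1 : f (v + 1) = true := (key (v + 1) hafter).trans hℓ
      refine hN' ⟨fun _ => v, ?_, fun _ => (hmemT v).1 hvT, hfv1⟩
      intro a b hab
      exact absurd (Fin.fin_one_eq_zero a ▸ Fin.fin_one_eq_zero b ▸ rfl) hab.ne
    · obtain ⟨w, hwm, hwS, hwlast⟩ := hY
      have hTne : T.Nonempty := ⟨w (Fin.last j), (hmemT _).2 (hwS _)⟩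
      set v := T.max' hTne with hv
      have hvT : v ∈ T := T.max'_mem hTne
      have hafter : ∀ u ≥ v + 1, f u = f (u + 1) := by
        intro u hu
        by_contra h
        have : u ∈ T := (hmemT u).2 h
        have := T.le_max' u this
        omega
      have hfv1 : f (v + 1) = true := (key (v + 1) hafter).trans hℓ
      have hlast_lt : w (Fin.last j) < v := by
        have hle : w (Fin.last j) ≤ v := T.le_max' _ ((hmemT _).2 (hwS _))
        rcases lt_or_eq_of_le hle with h | h
        · exact h
        · rw [h, hfv1] at hwlast
          exact Bool.noConfusion hwlast
      refine hN' ⟨fun i : Fin (j + 2) =>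
        if h : (i : ℕ) ≤ j then w ⟨i, by omega⟩ else v, ?_, ?_, ?_⟩
      · intro a b hab
        rw [Fin.lt_def] at hab
        by_cases ha : (a : ℕ) ≤ j <;> by_cases hb : (b : ℕ) ≤ j
        · simp only [ha, hb, dif_pos]
          exact hwm (show (⟨(a : ℕ), by omega⟩ : Fin (j + 1)) < ⟨(b : ℕ), by omega⟩ from
            Fin.mk_lt_mk.mpr hab)
        · simp only [ha, hb, dif_pos, dif_neg, not_false_iff]
          calc w ⟨(a : ℕ), by omega⟩ ≤ w (Fin.last j) :=
                hwm.monotone (Fin.mk_le_mk.mpr (by simpa using ha) : _ ≤ Fin.last j)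
            _ < v := hlast_lt
        · omega
        · have := a.isLt; have := b.isLt; omega
      · intro i
        by_cases h : (i : ℕ) ≤ j
        · simp only [h, dif_pos]
          exact hwS _
        · simp only [h, dif_neg, not_false_iff]
          exact (hmemT v).1 hvT
      · have h : ¬ ((Fin.last (j + 1) : ℕ) ≤ j) := by simp
        simp only [h, dif_neg, not_false_iff]
        exact hfv1
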